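/- Let A be a nonempty finite alphabet and S a substitution on A, and suppose Ĉ > 0 and θ ≥ 1 satisfy |Sⁿ(a)| ≤ Ĉ·θⁿ for all a ∈ A and n ∈ ℕ. Let u be a nonempty word over A and ω₀ = u^∞ the associated periodic configuration. Then for every n ∈ ℕ and every r ≥ 1, the number of distinct length-r words occurring in Sⁿ(ω₀) satisfies |W(Sⁿ(ω₀))_r| ≤ Ĉ·θⁿ·|u|. -/

import Mathlib

namespace QC

variable {A : Type*}

/-- The shift action of `ℤ` on configurations: `(m · ω)(n) = ω (n - m)`. -/
def shift (m : ℤ) (ω : ℤ → A) : ℤ → A := fun n => ω (n - m)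

/-- The word `u` occurs in the configuration `ω` (at some position `k`). -/
def Occurs (u : List A) (ω : ℤ → A) : Prop :=
  ∃ k : ℤ, u = (List.range u.length).map fun i => ω (k + i)

/-- The dictionary of a configuration: all (nonempty) words occurring in it. -/
def Dict (ω : ℤ → A) : Set (List A) := {u | u ≠ [] ∧ Occurs u ω}

/-- The set of length-`ℓ` words occurring in a configuration. -/
def DictLen (ω : ℤ → A) (ℓ : ℕ) : Set (List A) := {u | u.length = ℓ ∧ Occurs u ω}

/-- The extension of a substitution rule `S : A → List A` to words, by concatenation. -/
def wordSub (S : A → List A) (u : List A) : List A := (u.map S).flatten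

/-- A word is legal for `S` if it is an infix of `Sⁿ(a)` for some letter `a` and `n : ℕ`. -/
def Legal (S : A → List A) (u : List A) : Prop :=
  ∃ (a : A) (n : ℕ), u <:+: (wordSub S)^[n] [a]

/-- `S` is primitive: some power `p ≥ 1` of `S` maps every letter to a word containing
all letters. -/
def Primitive (S : A → List A) : Prop :=
  ∃ p : ℕ, 1 ≤ p ∧ ∀ a b : A, b ∈ (wordSub S)^[p] [a]

/-- The starting position (in `S ω`) of the block coming from the letter `ω k`. -/
def blockStart (S : A → List A) (ω : ℤ → A) (k : ℤ) : ℤ :=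
  if 0 ≤ k then ((List.range k.toNat).map fun i => ((S (ω i)).length : ℤ)).sum
  else -((List.range (-k).toNat).map fun i => ((S (ω (-(i : ℤ) - 1))).length : ℤ)).sum

open Classical in
/-- The extension of a substitution to two-sided configurations: the block structure of
`S ω` is `⋯ S(ω(-1)) . S(ω 0) S(ω 1) ⋯`, with the block of `ω 0` starting at position `0`. -/
noncomputable def confSub [Nonempty A] (S : A → List A) (ω : ℤ → A) : ℤ → A := fun n =>
  if h : ∃ k : ℤ, blockStart S ω k ≤ n ∧ n < blockStart S ω (k + 1) then
    (S (ω (Classical.choose h))).getD (n - blockStart S ω (Classical.choose h)).toNat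
      (Classical.arbitrary A)
  else Classical.arbitrary A

/-- The metric on configurations:
`d(ω₁, ω₂) = inf { 1/(r+1) : ω₁ and ω₂ agree on all |k| < r }`. -/
noncomputable def confDist (ω₁ ω₂ : ℤ → A) : ℝ :=
  sInf {x : ℝ | ∃ r : ℕ, x = 1 / (r + 1) ∧ ∀ k : ℤ, |k| < (r : ℤ) → ω₁ k = ω₂ k}

/-- Distance from a configuration to a set of configurations. -/
noncomputable def distToSet (ω : ℤ → A) (Ω : Set (ℤ → A)) : ℝ :=
  sInf (confDist ω '' Ω)

/-- The Hausdorff distance between two sets of configurations, induced by `confDist`. -/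
noncomputable def hausDist (Ω₁ Ω₂ : Set (ℤ → A)) : ℝ :=
  max (sSup ((fun ω => distToSet ω Ω₂) '' Ω₁)) (sSup ((fun ω => distToSet ω Ω₁) '' Ω₂))

/-- The product topology on `ℤ → A`, where `A` carries the discrete topology. -/
def confTop (A : Type*) : TopologicalSpace (ℤ → A) :=
  @Pi.topologicalSpace ℤ (fun _ => A) fun _ => ⊥

/-- The shift orbit of a configuration. -/
def orbit (ω : ℤ → A) : Set (ℤ → A) := {η | ∃ m : ℤ, η = shift m ω}

/-- The hull of a configuration: the closure of its shift orbit in the product topology. -/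
def hull (ω : ℤ → A) : Set (ℤ → A) := @closure _ (confTop A) (orbit ω)

/-- The `n`-th iterated hull `Ωₙ(ω₀)`: the hull of `Sⁿ(ω₀)`. -/
noncomputable def IHS [Nonempty A] (S : A → List A) (ω₀ : ℤ → A) (n : ℕ) : Set (ℤ → A) :=
  hull ((confSub S)^[n] ω₀)

/-- The substitution subshift `Ω(S) = {ω : W(ω) ⊆ W(S)}`. -/
def OmegaS (S : A → List A) : Set (ℤ → A) := {ω | ∀ u ∈ Dict ω, Legal S u}

/-- Edges of the directed graph `G(S)`: `u → w` iff `u, w` are both illegal and `w` is an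
infix of `S(u)`. -/
def GEdge (S : A → List A) (u w : List A) : Prop :=
  ¬Legal S u ∧ ¬Legal S w ∧ w <:+: wordSub S u

/-- `p` is a directed path of length `ℓ` in `G(S)` (on the vertex set of `2`-words). -/
def GPath (S : A → List A) (p : ℕ → List A) (ℓ : ℕ) : Prop :=
  (∀ i ≤ ℓ, (p i).length = 2) ∧ ∀ j < ℓ, GEdge S (p j) (p (j + 1))

/-- An initial configuration is good for `S` if every directed path in `G(S)` starting at a
`2`-word occurring in `ω₀` has length `< |A|²`. -/
def GoodInit [Fintype A] (S : A → List A) (ω₀ : ℤ → A) : Prop :=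
  ∀ (p : ℕ → List A) (ℓ : ℕ), GPath S p ℓ → Occurs (p 0) ω₀ → ℓ < (Fintype.card A) ^ 2

/-- The substitution matrix of `S`: `M(S)_{a,b}` is the number of occurrences of `a`
in `S(b)`. -/
def subMatrix [Fintype A] [DecidableEq A] (S : A → List A) : Matrix A A ℝ :=
  fun a b => ((S b).count a : ℝ)

/-- The Perron–Frobenius eigenvalue of `S`: the spectral radius of its substitution
matrix (viewed as a complex matrix). -/
noncomputable def pfEigenvalue [Fintype A] [DecidableEq A] (S : A → List A) : ℝ :=
  (spectralRadius ℂ ((subMatrix S).map (algebraMap ℝ ℂ))).toReal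

/-- The periodic configuration `u^∞`, satisfying `u^∞(n) = u(n mod |u|)`. -/
noncomputable def perConf [Nonempty A] (u : List A) : ℤ → A := fun n =>
  u.getD (n % (u.length : ℤ)).toNat (Classical.arbitrary A)

/-- `ℓ²(ℤ, ℂ)`. -/
abbrev l2Z : Type := lp (fun _ : ℤ => ℂ) 2

/-- `H` is the Schrödinger operator on `ℓ²(ℤ,ℂ)` with potential `v ∘ ω`:
`(H ψ)(n) = -(ψ(n+1) + ψ(n-1) - 2ψ(n)) + v(ω(n)) ψ(n)`. -/
def IsSchrodinger (v : A → ℝ) (ω : ℤ → A) (H : l2Z →L[ℂ] l2Z) : Prop :=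
  ∀ (ψ : l2Z) (n : ℤ),
    (H ψ : ℤ → ℂ) n = -((ψ : ℤ → ℂ) (n + 1) + (ψ : ℤ → ℂ) (n - 1) - 2 * (ψ : ℤ → ℂ) n)
      + (v (ω n) : ℂ) * (ψ : ℤ → ℂ) n

/-- The spectrum of `H`, viewed as a subset of `ℝ`. -/
def realSpectrum (H : l2Z →L[ℂ] l2Z) : Set ℝ := {x : ℝ | (x : ℂ) ∈ spectrum ℂ H}

/-!
Substitution commutes with periodic repetition: `S(w^∞) = S(w)^∞`, because the blocks of
`S(w^∞)` repeat with period `|S(w)|`. Hence `Sⁿ(u^∞) = (Sⁿ u)^∞`. A configuration of period `Q`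
has at most `Q` words of each length, one per starting position modulo `Q`, and
`|Sⁿ u| ≤ Ĉ θⁿ |u|` by summing the growth bound over the letters of `u`.
-/

theorem _root_.Function.Periodic.eq_of_eqOn_Ico {α β : Type*} [AddCommGroup α] [LinearOrder α]
    [IsOrderedAddMonoid α] [Archimedean α] {f g : α → β} {c : α}
    (hf : Function.Periodic f c) (hg : Function.Periodic g c) (hc : 0 < c)
    (h : Set.EqOn f g (Set.Ico 0 c)) : f = g := by
  have hfg : Function.Periodic (fun x => (f x, g x)) c := fun x => by simp only [hf x, hg x]
  funext x
  obtain ⟨y, hy, hxy⟩ := hfg.exists_mem_Ico₀ hc x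
  obtain ⟨hfxy, hgxy⟩ := Prod.mk.inj hxy
  rw [hfxy, hgxy, h hy]

theorem ncard_dictLen_le_of_periodic {ω : ℤ → A} {Q : ℕ} (hQ : 0 < Q)
    (hω : Function.Periodic ω Q) (r : ℕ) : (DictLen ω r).ncard ≤ Q := by
  set word : ℤ → List A := fun k => (List.range r).map fun i => ω (k + i)
  have hword : Function.Periodic word Q := fun k => by
    simp only [word, add_right_comm k, hω _]
  have hsub : DictLen ω r ⊆ word '' Set.Ico 0 Q := by
    rintro v ⟨hlen, k, hk⟩
    subst hlen
    obtain ⟨y, hy, hky⟩ := hword.exists_mem_Ico₀ (by exact_mod_cast hQ) k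
    exact ⟨y, hy, hky ▸ hk.symm⟩
  calc (DictLen ω r).ncard ≤ (word '' Set.Ico 0 Q).ncard :=
        Set.ncard_le_ncard hsub ((Set.finite_Ico _ _).image _)
    _ ≤ (Set.Ico (0 : ℤ) Q).ncard := Set.ncard_image_le (Set.finite_Ico _ _)
    _ = Q := by rw [Set.ncard_eq_toFinset_card', Set.toFinset_Ico, Int.card_Ico]; simp

section Substitution

variable (S : A → List A)

theorem wordSub_append (x y : List A) : wordSub S (x ++ y) = wordSub S x ++ wordSub S y := by
  simp [wordSub]

theorem wordSub_iterate_append (n : ℕ) (x y : List A) :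
    (wordSub S)^[n] (x ++ y) = (wordSub S)^[n] x ++ (wordSub S)^[n] y := by
  induction n generalizing x y with
  | zero => rfl
  | succ n ih => simp only [Function.iterate_succ_apply, wordSub_append, ih]

theorem wordSub_iterate_nil (n : ℕ) : (wordSub S)^[n] [] = [] := by
  simpa using wordSub_iterate_append S n [] []

theorem getElem?_wordSub_length_take_add (w : List A) {k j : ℕ} (hk : k < w.length)
    (hj : j < (S w[k]).length) :
    (wordSub S w)[(wordSub S (w.take k)).length + j]? = (S w[k])[j]? := by
  have hsplit : wordSub S w = wordSub S (w.take k) ++ (S w[k] ++ wordSub S (w.drop (k + 1))) := by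
    conv_lhs => rw [← List.take_append_drop k w, List.drop_eq_getElem_cons hk]
    simp only [wordSub, List.map_append, List.map_cons, List.flatten_append, List.flatten_cons]
  rw [hsplit, List.getElem?_append_right (by omega), Nat.add_sub_cancel_left,
    List.getElem?_append_left hj]

theorem length_wordSub_iterate_le {C θ : ℝ}
    (hgrow : ∀ (a : A) (n : ℕ), (((wordSub S)^[n] [a]).length : ℝ) ≤ C * θ ^ n)
    (n : ℕ) (v : List A) : (((wordSub S)^[n] v).length : ℝ) ≤ C * θ ^ n * v.length := by
  induction v with
  | nil => simp [wordSub_iterate_nil]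
  | cons a t ih =>
    rw [← List.singleton_append, wordSub_iterate_append, List.length_append,
      List.length_append, List.length_singleton]
    push_cast
    linarith [hgrow a n]

variable {S} (hS : ∀ a, S a ≠ [])
include hS

theorem wordSub_iterate_ne_nil {x : List A} (hx : x ≠ []) (n : ℕ) : (wordSub S)^[n] x ≠ [] := by
  induction n with
  | zero => exact hx
  | succ n ih =>
    rw [Function.iterate_succ_apply']
    obtain ⟨a, t, ht⟩ := List.exists_cons_of_ne_nil ih
    simp [ht, wordSub, hS a]

end Substitution

theorem perConf_periodic [Nonempty A] (w : List A) : Function.Periodic (perConf w) w.length :=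
  fun m => by simp [perConf]

theorem perConf_natCast [Nonempty A] {w : List A} {k : ℕ} (hk : k < w.length) :
    perConf w k = w[k] := by
  rw [perConf, Int.emod_eq_of_lt (by omega) (by omega), Int.toNat_natCast,
    List.getD_eq_getElem _ _ hk]

section BlockStart

variable (S : A → List A) (ω : ℤ → A)

@[simp] theorem blockStart_zero : blockStart S ω 0 = 0 := by simp [blockStart]

theorem blockStart_succ (k : ℤ) :
    blockStart S ω (k + 1) = blockStart S ω k + (S (ω k)).length := by
  rcases le_or_gt 0 k with hk | hk
  · rw [blockStart, blockStart, if_pos hk, if_pos (by omega),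
      show (k + 1).toNat = k.toNat + 1 by omega]
    simp [List.range_succ, Int.toNat_of_nonneg hk]
  · rcases eq_or_ne k (-1) with rfl | hne
    · simp [blockStart]
    · rw [blockStart, blockStart, if_neg (by omega), if_neg (by omega),
        show (-k).toNat = (-(k + 1)).toNat + 1 by omega]
      simp [List.range_succ, max_eq_left (show (0 : ℤ) ≤ -1 + -k by omega)]

theorem blockStart_add_of_periodic {P : ℤ} (hω : Function.Periodic ω P) (k : ℤ) :
    blockStart S ω (k + P) = blockStart S ω k + blockStart S ω P := by
  induction k using Int.induction_on with
  | zero => simp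
  | succ k ih =>
    rw [add_right_comm, blockStart_succ, blockStart_succ, hω, ih]
    ring
  | pred k ih =>
    have h₁ := blockStart_succ S ω (-(k : ℤ) - 1 + P)
    have h₂ := blockStart_succ S ω (-(k : ℤ) - 1)
    rw [sub_add_cancel] at h₂
    rw [add_right_comm, sub_add_cancel, hω] at h₁
    omega

theorem blockStart_perConf [Nonempty A] (w : List A) {k : ℕ} (hk : k ≤ w.length) :
    blockStart S (perConf w) k = (wordSub S (w.take k)).length := by
  induction k with
  | zero => simp [wordSub]
  | succ k ih =>
    rw [Nat.cast_succ, blockStart_succ, ih (by omega), perConf_natCast (by omega),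
      List.take_add_one, List.getElem?_eq_getElem (by omega), wordSub_append]
    simp [wordSub]

variable {S} (hS : ∀ a, S a ≠ [])
include hS

theorem strictMono_blockStart : StrictMono (blockStart S ω) :=
  strictMono_int_of_lt_succ fun k => by
    rw [blockStart_succ]
    have := List.length_pos_iff.2 (hS (ω k))
    omega

theorem exists_blockStart_add (n : ℤ) :
    ∃ k, ∃ j < (S (ω k)).length, n = blockStart S ω k + j := by
  have hmono : Monotone fun k => blockStart S ω k - k := monotone_int_of_le_succ fun k => by
    have := strictMono_blockStart ω hS (lt_add_one k)
    omega
  obtain ⟨k, hk, hmax⟩ := Int.exists_greatest_of_bdd (P := fun k => blockStart S ω k ≤ n)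
    ⟨max n 0, fun k hk => by
      rcases le_or_gt k 0 with h | h
      · omega
      · have := hmono h.le
        simp only [blockStart_zero, sub_self, Int.sub_nonneg] at this
        omega⟩
    ⟨min n 0, by 
      have := hmono (min_le_right n 0)
      simp only [blockStart_zero, sub_self, tsub_le_iff_right, zero_add] at this
      omega⟩
  have hnext : n < blockStart S ω (k + 1) := by
    by_contra! h
    exact absurd (hmax _ h) (by omega)
  rw [blockStart_succ] at hnext
  exact ⟨k, (n - blockStart S ω k).toNat, by omega, by omega⟩

theorem confSub_blockStart_add [Nonempty A] {k : ℤ} {j : ℕ} (hj : j < (S (ω k)).length) :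
    confSub S ω (blockStart S ω k + j) = (S (ω k))[j] := by
  have hsucc := blockStart_succ S ω k
  have hex : ∃ c, blockStart S ω c ≤ blockStart S ω k + j ∧
      blockStart S ω k + j < blockStart S ω (c + 1) := ⟨k, by omega, by omega⟩
  obtain ⟨h₁, h₂⟩ := Classical.choose_spec hex
  have hmono := strictMono_blockStart ω hS
  -- the block containing a position is unique, so the choice made in `confSub` is `k`
  have hc : Classical.choose hex = k := by
    have := hmono.lt_iff_lt.1 (h₁.trans_lt (show _ < blockStart S ω (k + 1) by omega))
    have := hmono.lt_iff_lt.1 ((le_add_of_nonneg_right (Int.natCast_nonneg j)).trans_lt h₂)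
    omega
  rw [confSub, dif_pos hex, hc, add_sub_cancel_left, Int.toNat_natCast,
    List.getD_eq_getElem _ _ hj]

theorem confSub_periodic [Nonempty A] {P : ℤ} (hω : Function.Periodic ω P) :
    Function.Periodic (confSub S ω) (blockStart S ω P) := by
  intro n
  obtain ⟨k, j, hj, rfl⟩ := exists_blockStart_add ω hS n
  have hj' : j < (S (ω (k + P))).length := by rwa [hω]
  rw [add_right_comm, ← blockStart_add_of_periodic S ω hω, confSub_blockStart_add ω hS hj',
    confSub_blockStart_add ω hS hj]
  simp only [hω k]

theorem confSub_perConf [Nonempty A] {w : List A} (hw : w ≠ []) :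
    confSub S (perConf w) = perConf (wordSub S w) := by
  have hlen : blockStart S (perConf w) w.length = (wordSub S w).length := by
    simpa using blockStart_perConf S w le_rfl
  have hpos : 0 < (wordSub S w).length := List.length_pos_iff.2 (wordSub_iterate_ne_nil hS hw 1)
  refine (hlen ▸ confSub_periodic (perConf w) hS (perConf_periodic w)).eq_of_eqOn_Ico
    (perConf_periodic _) (by exact_mod_cast hpos) ?_
  rintro n ⟨hn0, hnQ⟩
  obtain ⟨k, j, hj, rfl⟩ := exists_blockStart_add (perConf w) hS n
  have hmono := strictMono_blockStart (perConf w) hS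
  have hk0 : 0 ≤ k := by
    have := hmono.lt_iff_lt.1 (show blockStart S (perConf w) 0 < blockStart S (perConf w) (k + 1)
      by rw [blockStart_succ, blockStart_zero]; omega)
    omega
  have hkw : k < w.length := hmono.lt_iff_lt.1 (by rw [hlen]; omega)
  lift k to ℕ using hk0
  have hkw' : k < w.length := by exact_mod_cast hkw
  rw [blockStart_perConf S w hkw'.le] at hnQ
  rw [confSub_blockStart_add (perConf w) hS hj, blockStart_perConf S w hkw'.le, ← Nat.cast_add,
    perConf_natCast (w := wordSub S w) (by omega)]
  refine Option.some_injective _ ?_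
  rw [← List.getElem?_eq_getElem, ← List.getElem?_eq_getElem, perConf_natCast hkw',
    getElem?_wordSub_length_take_add S w hkw' (by rwa [← perConf_natCast hkw'])]

end BlockStart

theorem confSub_iterate_perConf [Nonempty A] {S : A → List A} (hS : ∀ a, S a ≠ [])
    {u : List A} (hu : u ≠ []) (n : ℕ) :
    (confSub S)^[n] (perConf u) = perConf ((wordSub S)^[n] u) := by
  induction n with
  | zero => rfl
  | succ n ih =>
    rw [Function.iterate_succ_apply', ih, confSub_perConf hS (wordSub_iterate_ne_nil hS hu n),
      ← Function.iterate_succ_apply' (wordSub S)]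

theorem stmt11_general {A : Type*} [Nonempty A] (S : A → List A) (hS : ∀ a, S a ≠ [])
    (Cu θ : ℝ)
    (hgrow : ∀ (a : A) (n : ℕ), (((wordSub S)^[n] [a]).length : ℝ) ≤ Cu * θ ^ n)
    (u : List A) (hu : u ≠ []) :
    ∀ (n r : ℕ), 1 ≤ r →
      ((DictLen ((confSub S)^[n] (perConf u)) r).ncard : ℝ) ≤ Cu * θ ^ n * u.length := by
  intro n r _
  rw [confSub_iterate_perConf hS hu]
  have hpos : 0 < ((wordSub S)^[n] u).length :=
    List.length_pos_iff.2 (wordSub_iterate_ne_nil hS hu n)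
  calc ((DictLen (perConf ((wordSub S)^[n] u)) r).ncard : ℝ)
      ≤ ((wordSub S)^[n] u).length := by
        exact_mod_cast ncard_dictLen_le_of_periodic hpos (perConf_periodic _) r
    _ ≤ Cu * θ ^ n * u.length := length_wordSub_iterate_le S hgrow n u

/-- complexity bound for the iterates of a periodic configuration:
`|W(Sⁿ(u^∞))_r| ≤ Ĉ θⁿ |u|`. -/
theorem stmt11 {A : Type*} [Fintype A] [Nonempty A] (S : A → List A) (hS : ∀ a, S a ≠ [])
    (Cu θ : ℝ) (hCu : 0 < Cu) (hθ : 1 ≤ θ)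
    (hgrow : ∀ (a : A) (n : ℕ), (((wordSub S)^[n] [a]).length : ℝ) ≤ Cu * θ ^ n)
    (u : List A) (hu : u ≠ []) :
    ∀ (n r : ℕ), 1 ≤ r →
      ((DictLen ((confSub S)^[n] (perConf u)) r).ncard : ℝ) ≤ Cu * θ ^ n * u.length :=
  stmt11_general S hS Cu θ hgrow u hu

end QC
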